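/- arXiv:1907.03603 — 6 statements merged into one kernel-verified Lean document; each statement's English description precedes it below -/
import Mathlib

section
/- Let Z : ℝ³ → [0,∞) be measurable and satisfy W⁰(ξ) + (18/((2π)³ |ξ|)) ∫_{ℝ³} Z(ξ−η) Z(η) dη ≤ Z(ξ) for a.e. ξ, where W⁰ ≥ 0 is measurable. Define W⁽⁰⁾(t,ξ) = e^(−t|ξ|²) W⁰(ξ) and W⁽ⁿ⁺¹⁾ = W⁽⁰⁾ + B₀(W⁽ⁿ⁾, W⁽ⁿ⁾), with B₀(W,V)(t,ξ) = (18/(2π)³) ∫₀ᵗ e^(−(t−s)|ξ|²) |ξ| ∫ W(s,η) V(s,ξ−η) dη ds. Then for every n ≥ 0, t > 0 and ξ, W⁽ⁿ⁾(t,ξ) ≤ Z(ξ). -/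
open MeasureTheory Set Filter
open scoped ENNReal

noncomputable section

/-- The bilinear operator `B₀` of the cheap Fourier–Navier–Stokes equation. -/
def cheapB (W V : ℝ → EuclideanSpace ℝ (Fin 3) → ℝ≥0∞) (t : ℝ)
    (ξ : EuclideanSpace ℝ (Fin 3)) : ℝ≥0∞ :=
  ENNReal.ofReal (18 / (2 * Real.pi) ^ 3) *
    ∫⁻ s in Set.Ioc (0 : ℝ) t,
      ENNReal.ofReal (Real.exp (-((t - s) * ‖ξ‖ ^ 2)) * ‖ξ‖) *
        ∫⁻ η, W s η * V s (ξ - η)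

/-- The Picard iterates `W⁽ⁿ⁾`. -/
def cheapIter (W0 : EuclideanSpace ℝ (Fin 3) → ℝ≥0∞) :
    ℕ → ℝ → EuclideanSpace ℝ (Fin 3) → ℝ≥0∞
  | 0 => fun t ξ => ENNReal.ofReal (Real.exp (-(t * ‖ξ‖ ^ 2))) * W0 ξ
  | n + 1 => fun t ξ =>
      cheapIter W0 0 t ξ + cheapB (cheapIter W0 n) (cheapIter W0 n) t ξ

/-! Induction on `n`: if `W⁽ⁿ⁾ ≤ Z` a.e. at all positive times, then
`B₀(W⁽ⁿ⁾, W⁽ⁿ⁾)(t, ξ) ≤ 18 / ((2π)³ |ξ|) · (Z ∗ Z)(ξ)`, because the heat factor integrates in time to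
`∫₀ᵗ e^{-(t-s)|ξ|²} |ξ| ds ≤ |ξ|⁻¹`; together with `W⁽⁰⁾ ≤ W⁰` the supersolution inequality gives
`W⁽ⁿ⁺¹⁾ ≤ Z`. -/

theorem integral_exp_neg_sub_mul {a : ℝ} (ha : a ≠ 0) (t : ℝ) :
    ∫ s in (0 : ℝ)..t, Real.exp (-((t - s) * a)) = (1 - Real.exp (-(t * a))) / a := by
  have hshift : (fun s => Real.exp (-((t - s) * a))) = fun s => Real.exp (a * s - a * t) := by
    ext s; ring_nf
  rw [hshift, intervalIntegral.integral_comp_mul_sub (f := Real.exp) ha, integral_exp]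
  simp only [mul_zero, zero_sub, sub_self, Real.exp_zero, smul_eq_mul]
  ring_nf

theorem lintegral_Ioc_heatKernel_le {r : ℝ} (hr : 0 < r) (t : ℝ) :
    ∫⁻ s in Ioc 0 t, ENNReal.ofReal (Real.exp (-((t - s) * r ^ 2)) * r) ≤
      (ENNReal.ofReal r)⁻¹ := by
  rcases le_or_gt t 0 with ht | ht
  · simp [Ioc_eq_empty_of_le ht]
  have hcont : Continuous fun s => Real.exp (-((t - s) * r ^ 2)) * r := by fun_prop
  rw [← ofReal_integral_eq_lintegral_ofReal
      ((hcont.integrableOn_Icc (a := 0) (b := t)).mono_set Ioc_subset_Icc_self)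
      (ae_of_all _ fun s => by positivity),
    ← intervalIntegral.integral_of_le ht.le, intervalIntegral.integral_mul_const,
    integral_exp_neg_sub_mul (pow_ne_zero 2 hr.ne'), ← ENNReal.ofReal_inv_of_pos hr]
  refine ENNReal.ofReal_le_ofReal ?_
  calc (1 - Real.exp (-(t * r ^ 2))) / r ^ 2 * r ≤ 1 / r ^ 2 * r := by
        gcongr
        linarith [Real.exp_pos (-(t * r ^ 2))]
    _ = r⁻¹ := by field_simp

theorem cheapIter_zero_le (W0 : EuclideanSpace ℝ (Fin 3) → ℝ≥0∞) {t : ℝ} (ht : 0 ≤ t)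
    (ξ : EuclideanSpace ℝ (Fin 3)) : cheapIter W0 0 t ξ ≤ W0 ξ := by
  simp only [cheapIter]
  refine mul_le_of_le_one_left bot_le (ENNReal.ofReal_le_one.mpr ?_)
  exact Real.exp_le_one_iff.mpr (neg_nonpos.mpr (by positivity))

theorem lintegral_mul_sub_le_of_ae_le {G : Type*} [MeasurableSpace G] [AddGroup G]
    [MeasurableAdd G] [MeasurableNeg G] {μ : Measure G} [μ.IsAddLeftInvariant]
    [μ.IsNegInvariant] {f g F H : G → ℝ≥0∞} (hf : f ≤ᵐ[μ] F) (hg : g ≤ᵐ[μ] H) (ξ : G) :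
    ∫⁻ η, f η * g (ξ - η) ∂μ ≤ ∫⁻ η, F η * H (ξ - η) ∂μ := by
  have hg' : ∀ᵐ η ∂μ, g (ξ - η) ≤ H (ξ - η) :=
    (Measure.measurePreserving_sub_left μ ξ).quasiMeasurePreserving.ae hg
  exact lintegral_mono_ae (by filter_upwards [hf, hg'] with η h₁ h₂ using mul_le_mul' h₁ h₂)

theorem cheapB_le {W V : ℝ → EuclideanSpace ℝ (Fin 3) → ℝ≥0∞} {t : ℝ}
    {ξ : EuclideanSpace ℝ (Fin 3)} (hξ : ξ ≠ 0) {C : ℝ≥0∞}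
    (hconv : ∀ s ∈ Ioc 0 t, ∫⁻ η, W s η * V s (ξ - η) ≤ C) :
    cheapB W V t ξ ≤ ENNReal.ofReal (18 / (2 * Real.pi) ^ 3) * (ENNReal.ofReal ‖ξ‖)⁻¹ * C := by
  have hmeas : Measurable fun s : ℝ => ENNReal.ofReal (Real.exp (-((t - s) * ‖ξ‖ ^ 2)) * ‖ξ‖) :=
    ENNReal.measurable_ofReal.comp (by fun_prop)
  rw [cheapB, mul_assoc]
  gcongr
  calc _ ≤ ∫⁻ s in Ioc 0 t, ENNReal.ofReal (Real.exp (-((t - s) * ‖ξ‖ ^ 2)) * ‖ξ‖) * C :=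
        setLIntegral_mono (hmeas.mul_const C) fun s hs => by gcongr; exact hconv s hs
    _ = (∫⁻ s in Ioc 0 t, ENNReal.ofReal (Real.exp (-((t - s) * ‖ξ‖ ^ 2)) * ‖ξ‖)) * C :=
        lintegral_mul_const C hmeas
    _ ≤ (ENNReal.ofReal ‖ξ‖)⁻¹ * C := by
        gcongr
        exact lintegral_Ioc_heatKernel_le (norm_pos_iff.mpr hξ) t

theorem stationary_supersolution_dominates_general
    (W0 Z : EuclideanSpace ℝ (Fin 3) → ℝ≥0∞)
    (hsuper : ∀ᵐ ξ, W0 ξ +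
      ENNReal.ofReal (18 / (2 * Real.pi) ^ 3) * (ENNReal.ofReal ‖ξ‖)⁻¹ *
        ∫⁻ η, Z (ξ - η) * Z η ≤ Z ξ) :
    ∀ n : ℕ, ∀ t : ℝ, 0 < t → ∀ᵐ ξ, cheapIter W0 n t ξ ≤ Z ξ := by
  intro n
  induction n with
  | zero =>
    intro t ht
    filter_upwards [hsuper] with ξ hξ
    exact (cheapIter_zero_le W0 ht.le ξ).trans (le_self_add.trans hξ)
  | succ n ih =>
    intro t ht
    filter_upwards [hsuper, volume.ae_ne 0] with ξ hsup hξ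
    have hconv : ∀ s ∈ Ioc 0 t, ∫⁻ η, cheapIter W0 n s η * cheapIter W0 n s (ξ - η) ≤
        ∫⁻ η, Z (ξ - η) * Z η := fun s hs =>
      (lintegral_mul_sub_le_of_ae_le (ih s hs.1) (ih s hs.1) ξ).trans_eq
        (lintegral_congr fun η => mul_comm _ _)
    rw [cheapIter]
    exact (add_le_add (cheapIter_zero_le W0 ht.le ξ) (cheapB_le hξ hconv)).trans hsup

theorem stationary_supersolution_dominates
    (W0 Z : EuclideanSpace ℝ (Fin 3) → ℝ≥0∞)
    (hW0 : Measurable W0) (hZ : Measurable Z)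
    (hsuper : ∀ᵐ ξ, W0 ξ +
      ENNReal.ofReal (18 / (2 * Real.pi) ^ 3) * (ENNReal.ofReal ‖ξ‖)⁻¹ *
        ∫⁻ η, Z (ξ - η) * Z η ≤ Z ξ) :
    ∀ n : ℕ, ∀ t : ℝ, 0 < t → ∀ᵐ ξ, cheapIter W0 n t ξ ≤ Z ξ :=
  stationary_supersolution_dominates_general W0 Z hsuper
end
end

section
/- Let E = {Z measurable on ℝ³ : ‖Z‖_E := ess sup_ξ |ξ|² |Z(ξ)| < ∞}. Then there is a constant C such that for all Z, V ∈ E, the function ξ ↦ |ξ|^(−1) (|Z| ∗ |V|)(ξ) belongs to E with ‖ |ξ|^(−1)(|Z|∗|V|) ‖_E ≤ C ‖Z‖_E ‖V‖_E. -/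
/-!
Since `Z x ≤ ‖Z‖_E |x|⁻²` for almost every `x`, the convolution is bounded by
`‖Z‖_E ‖V‖_E K ξ` with `K ξ = ∫ |ξ - η|⁻² |η|⁻² dη`. In dimension three `K` is homogeneous of
degree `-1`, so it suffices to bound it on the unit sphere. For `|u| = 1` the larger of `|η|` and
`|u - η|` is at least `1/2`, which gives `|u - η|⁻² |η|⁻² ≤ 5 G η + 5 G (u - η)` with
`G y = |y|⁻² (1 + |y|²)⁻¹`, hence `K u ≤ 10 ∫ G`; in polar coordinates
`∫ G = 4π ∫₀^∞ (1 + t²)⁻¹ dt < ∞`.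
-/

open MeasureTheory
open scoped ENNReal NNReal

namespace ENNReal

theorem inv_sq_mul_inv_sq_le {a b : ℝ≥0∞} (hab : 1 ≤ a + b) :
    (a ^ 2)⁻¹ * (b ^ 2)⁻¹ ≤
      5 * ((a ^ 2)⁻¹ * (1 + a ^ 2)⁻¹) + 5 * ((b ^ 2)⁻¹ * (1 + b ^ 2)⁻¹) := by
  wlog hle : a ≤ b generalizing a b
  · rw [add_comm] at hab ⊢
    rw [mul_comm]
    exact this hab (le_of_not_ge hle)
  have key : 1 + a ^ 2 ≤ b ^ 2 * 5 :=
    calc 1 + a ^ 2 ≤ (a + b) ^ 2 + b ^ 2 := by gcongr; exact one_le_pow₀ hab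
      _ ≤ (b + b) ^ 2 + b ^ 2 := by gcongr
      _ = b ^ 2 * 5 := by ring
  have hb : (b ^ 2)⁻¹ ≤ 5 * (1 + a ^ 2)⁻¹ := by
    rw [ENNReal.inv_le_iff_inv_le, ENNReal.mul_inv (by simp) (by simp), inv_inv, mul_comm,
      ← div_eq_mul_inv]
    exact ENNReal.div_le_of_le_mul key
  calc (a ^ 2)⁻¹ * (b ^ 2)⁻¹ ≤ (a ^ 2)⁻¹ * (5 * (1 + a ^ 2)⁻¹) := by gcongr
    _ = 5 * ((a ^ 2)⁻¹ * (1 + a ^ 2)⁻¹) := by ring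
    _ ≤ _ := le_self_add

end ENNReal

theorem ae_le_inv_enorm_sq_mul_essSup {E : Type*} [NormedAddCommGroup E] [MeasurableSpace E]
    (μ : Measure E) [NullSingletonClass μ] (W : E → ℝ≥0∞) :
    ∀ᵐ x ∂μ, W x ≤ (‖x‖ₑ ^ 2)⁻¹ * essSup (fun x => ‖x‖ₑ ^ 2 * W x) μ := by
  filter_upwards [ENNReal.ae_le_essSup (μ := μ) (fun x => ‖x‖ₑ ^ 2 * W x),
    show ∀ᵐ x ∂μ, x ≠ 0 by simp [ae_iff, measure_singleton]] with x hx hx₀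
  calc W x = (‖x‖ₑ ^ 2)⁻¹ * (‖x‖ₑ ^ 2 * W x) := by
        rw [← mul_assoc, ENNReal.inv_mul_cancel (by simpa) (by simp), one_mul]
    _ ≤ _ := by gcongr

section HaarMeasure

variable {E : Type*} [NormedAddCommGroup E] [NormedSpace ℝ E] [MeasurableSpace E] [BorelSpace E]
  [FiniteDimensional ℝ E] (μ : Measure E) [μ.IsAddHaarMeasure]

theorem MeasureTheory.Measure.enorm_pow_finrank_mul_lintegral_comp_smul (f : E → ℝ≥0∞) {r : ℝ}
    (hr : r ≠ 0) :
    ‖r‖ₑ ^ Module.finrank ℝ E * ∫⁻ x, f (r • x) ∂μ = ∫⁻ x, f x ∂μ := by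
  have hmap : Measure.map (r • ·) μ = (‖r‖ₑ ^ Module.finrank ℝ E)⁻¹ • μ := by
    rw [Measure.map_addHaar_smul μ hr, abs_inv, abs_pow, ENNReal.ofReal_inv_of_pos (by positivity),
      ENNReal.ofReal_pow (abs_nonneg r), ← Real.norm_eq_abs, ofReal_norm]
  have hcomp : ∫⁻ x, f (r • x) ∂μ = ∫⁻ x, f x ∂(Measure.map (r • ·) μ) :=
    (lintegral_map_equiv f (MeasurableEquiv.smul₀ r hr)).symm
  rw [hcomp, hmap, lintegral_smul_measure, smul_eq_mul, ← mul_assoc,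
    ENNReal.mul_inv_cancel (pow_ne_zero _ (enorm_ne_zero.2 hr)) (by simp), one_mul]

noncomputable def invSqConv (ξ : E) : ℝ≥0∞ :=
  ∫⁻ η, (‖ξ - η‖ₑ ^ 2)⁻¹ * (‖η‖ₑ ^ 2)⁻¹ ∂μ

theorem lintegral_mul_le_essSup_mul_essSup_mul_invSqConv [Nontrivial E] (Z V : E → ℝ≥0∞)
    (ξ : E) :
    ∫⁻ η, Z (ξ - η) * V η ∂μ ≤
      essSup (fun x => ‖x‖ₑ ^ 2 * Z x) μ * essSup (fun x => ‖x‖ₑ ^ 2 * V x) μ *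
        invSqConv μ ξ := by
  set MZ := essSup (fun x => ‖x‖ₑ ^ 2 * Z x) μ
  set MV := essSup (fun x => ‖x‖ₑ ^ 2 * V x) μ
  have hZ : ∀ᵐ η ∂μ, Z (ξ - η) ≤ (‖ξ - η‖ₑ ^ 2)⁻¹ * MZ :=
    (Measure.measurePreserving_sub_left μ ξ).quasiMeasurePreserving.ae
      (ae_le_inv_enorm_sq_mul_essSup μ Z)
  calc ∫⁻ η, Z (ξ - η) * V η ∂μ
      ≤ ∫⁻ η, MZ * MV * ((‖ξ - η‖ₑ ^ 2)⁻¹ * (‖η‖ₑ ^ 2)⁻¹) ∂μ := by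
        refine lintegral_mono_ae ?_
        filter_upwards [hZ, ae_le_inv_enorm_sq_mul_essSup μ V] with η hZη hVη
        calc Z (ξ - η) * V η ≤ (‖ξ - η‖ₑ ^ 2)⁻¹ * MZ * ((‖η‖ₑ ^ 2)⁻¹ * MV) :=
              mul_le_mul' hZη hVη
          _ = _ := by ring
    _ = MZ * MV * invSqConv μ ξ := lintegral_const_mul _ (by fun_prop)

theorem invSqConv_smul {t : ℝ} (ht : t ≠ 0) (ξ : E) :
    invSqConv μ (t • ξ) = ‖t‖ₑ ^ Module.finrank ℝ E * (‖t‖ₑ ^ 4)⁻¹ * invSqConv μ ξ := by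
  have ht₀ : ‖t‖ₑ ≠ 0 := enorm_ne_zero.2 ht
  have hscale : ∀ η : E, (‖t • ξ - t • η‖ₑ ^ 2)⁻¹ * (‖t • η‖ₑ ^ 2)⁻¹ =
      (‖t‖ₑ ^ 4)⁻¹ * ((‖ξ - η‖ₑ ^ 2)⁻¹ * (‖η‖ₑ ^ 2)⁻¹) := by
    intro η
    simp only [← smul_sub, enorm_smul, mul_pow]
    rw [ENNReal.mul_inv (by simp [ht₀]) (by simp), ENNReal.mul_inv (by simp [ht₀]) (by simp),
      show (4 : ℕ) = 2 + 2 from rfl, pow_add, ENNReal.mul_inv (by simp [ht₀]) (by simp)]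
    ring
  rw [invSqConv, ← Measure.enorm_pow_finrank_mul_lintegral_comp_smul μ _ ht]
  simp only [hscale]
  rw [lintegral_const_mul' _ _ (by simp [ht₀]), invSqConv, mul_assoc]

theorem invSqConv_le_of_enorm_eq_one {u : E} (hu : ‖u‖ₑ = 1) :
    invSqConv μ u ≤ 10 * ∫⁻ y, (‖y‖ₑ ^ 2)⁻¹ * (1 + ‖y‖ₑ ^ 2)⁻¹ ∂μ := by
  set G : E → ℝ≥0∞ := fun y => (‖y‖ₑ ^ 2)⁻¹ * (1 + ‖y‖ₑ ^ 2)⁻¹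
  have hG : Measurable G := by fun_prop
  calc invSqConv μ u ≤ ∫⁻ η, (5 * G (u - η) + 5 * G η) ∂μ := by
        refine lintegral_mono fun η => ENNReal.inv_sq_mul_inv_sq_le ?_
        calc 1 = ‖u - η + η‖ₑ := by rw [sub_add_cancel, hu]
          _ ≤ ‖u - η‖ₑ + ‖η‖ₑ := enorm_add_le _ _
    _ = 5 * ∫⁻ η, G (u - η) ∂μ + 5 * ∫⁻ η, G η ∂μ := by
        rw [lintegral_add_right _ (hG.const_mul 5),
          lintegral_const_mul (f := fun η => G (u - η)) _ (hG.comp (by fun_prop)),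
          lintegral_const_mul _ hG]
    _ = 10 * ∫⁻ y, G y ∂μ := by rw [lintegral_sub_left_eq_self]; ring

theorem lintegral_inv_sq_mul_inv_one_add_sq_pos :
    0 < ∫⁻ y, (‖y‖ₑ ^ 2)⁻¹ * (1 + ‖y‖ₑ ^ 2)⁻¹ ∂μ := by
  rw [lintegral_pos_iff_support (by fun_prop)]
  simpa [Function.support] using NeZero.ne μ

theorem lintegral_inv_sq_mul_inv_one_add_sq_lt_top (hE : Module.finrank ℝ E = 3) :
    ∫⁻ y, (‖y‖ₑ ^ 2)⁻¹ * (1 + ‖y‖ₑ ^ 2)⁻¹ ∂μ < ∞ := by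
  have : Nontrivial E := Module.nontrivial_of_finrank_eq_succ hE
  have hint : Integrable (fun y : E => (‖y‖ ^ 2)⁻¹ * (1 + ‖y‖ ^ 2)⁻¹) μ := by
    rw [integrable_fun_norm_addHaar μ (f := fun t => (t ^ 2)⁻¹ * (1 + t ^ 2)⁻¹), hE]
    refine integrable_inv_one_add_sq.integrableOn.congr_fun (fun t ht => ?_) measurableSet_Ioi
    have : t ≠ 0 := ht.out.ne'
    simp only [smul_eq_mul]
    field_simp
  refine lt_of_eq_of_lt (lintegral_congr_ae ?_) hint.lintegral_lt_top
  filter_upwards [show ∀ᵐ y ∂μ, y ≠ 0 by simp [ae_iff, measure_singleton]] with y hy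
  have hy' : 0 < ‖y‖ := norm_pos_iff.2 hy
  rw [ENNReal.ofReal_mul (by positivity), ENNReal.ofReal_inv_of_pos (by positivity),
    ENNReal.ofReal_inv_of_pos (by positivity), ENNReal.ofReal_add zero_le_one (by positivity),
    ENNReal.ofReal_pow (norm_nonneg _), ofReal_norm, ENNReal.ofReal_one]

theorem invSqConv_le (hE : Module.finrank ℝ E = 3) {ξ : E} (hξ : ξ ≠ 0) :
    invSqConv μ ξ ≤ 10 * (∫⁻ y, (‖y‖ₑ ^ 2)⁻¹ * (1 + ‖y‖ₑ ^ 2)⁻¹ ∂μ) * ‖ξ‖ₑ⁻¹ := by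
  have hr : ‖ξ‖ ≠ 0 := norm_ne_zero_iff.2 hξ
  have hu : ‖(‖ξ‖⁻¹ • ξ)‖ₑ = 1 := by
    rw [enorm_smul, enorm_inv hr, enorm_norm, ENNReal.inv_mul_cancel (by simpa) (by simp)]
  have hcube : ‖ξ‖ₑ ^ 3 * (‖ξ‖ₑ ^ 4)⁻¹ = ‖ξ‖ₑ⁻¹ := by
    rw [ENNReal.inv_pow, pow_succ ‖ξ‖ₑ⁻¹ 3, ← mul_assoc, ← mul_pow,
      ENNReal.mul_inv_cancel (by simpa) (by simp), one_pow, one_mul]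
  calc invSqConv μ ξ = ‖ξ‖ₑ⁻¹ * invSqConv μ (‖ξ‖⁻¹ • ξ) := by
        conv_lhs => rw [← smul_inv_smul₀ hr ξ]
        rw [invSqConv_smul μ hr, hE, enorm_norm, hcube]
    _ ≤ _ := by rw [mul_comm]; gcongr; exact invSqConv_le_of_enorm_eq_one μ hu

end HaarMeasure

theorem leJan_Sznitman_bilinear_estimate :
    ∃ C : ℝ≥0, 0 < C ∧
      ∀ Z V : EuclideanSpace ℝ (Fin 3) → ℝ≥0∞, Measurable Z → Measurable V →
        essSup (fun ξ : EuclideanSpace ℝ (Fin 3) =>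
            ENNReal.ofReal (‖ξ‖ ^ 2) *
              ((ENNReal.ofReal ‖ξ‖)⁻¹ * ∫⁻ η, Z (ξ - η) * V η)) volume
          ≤ C * essSup (fun ξ : EuclideanSpace ℝ (Fin 3) =>
                ENNReal.ofReal (‖ξ‖ ^ 2) * Z ξ) volume
              * essSup (fun ξ : EuclideanSpace ℝ (Fin 3) =>
                ENNReal.ofReal (‖ξ‖ ^ 2) * V ξ) volume := by
  set C := 10 * ∫⁻ y : EuclideanSpace ℝ (Fin 3), (‖y‖ₑ ^ 2)⁻¹ * (1 + ‖y‖ₑ ^ 2)⁻¹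
  have hC₀ : C ≠ 0 := mul_ne_zero (by norm_num)
    (lintegral_inv_sq_mul_inv_one_add_sq_pos volume).ne'
  have hC : C ≠ ∞ := ENNReal.mul_ne_top (by norm_num)
    (lintegral_inv_sq_mul_inv_one_add_sq_lt_top volume finrank_euclideanSpace_fin).ne
  refine ⟨C.toNNReal, ENNReal.toNNReal_pos hC₀ hC, fun Z V _ _ => ?_⟩
  simp only [ENNReal.coe_toNNReal hC, ENNReal.ofReal_pow (norm_nonneg _), ofReal_norm]
  refine essSup_le_of_ae_le _ ?_
  filter_upwards [show ∀ᵐ ξ : EuclideanSpace ℝ (Fin 3), ξ ≠ 0 by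
    simp [ae_iff, measure_singleton]] with ξ hξ
  have hξ₀ : ‖ξ‖ₑ ≠ 0 := enorm_ne_zero.2 hξ
  calc ‖ξ‖ₑ ^ 2 * (‖ξ‖ₑ⁻¹ * ∫⁻ η, Z (ξ - η) * V η)
      ≤ ‖ξ‖ₑ ^ 2 * (‖ξ‖ₑ⁻¹ * (essSup (fun x => ‖x‖ₑ ^ 2 * Z x) volume *
          essSup (fun x => ‖x‖ₑ ^ 2 * V x) volume * (C * ‖ξ‖ₑ⁻¹))) := by
        gcongr
        refine (lintegral_mul_le_essSup_mul_essSup_mul_invSqConv volume Z V ξ).trans ?_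
        gcongr
        exact invSqConv_le volume finrank_euclideanSpace_fin hξ
    _ = C * essSup (fun x => ‖x‖ₑ ^ 2 * Z x) volume * essSup (fun x => ‖x‖ₑ ^ 2 * V x) volume *
          (‖ξ‖ₑ * ‖ξ‖ₑ⁻¹) ^ 2 := by ring
    _ = _ := by rw [ENNReal.mul_inv_cancel hξ₀ (by simp), one_pow, mul_one]
end

section
/- Let F = {Z measurable on ℝ³ : ‖Z‖_F := ess sup_ξ |ξ|^(5/2) |Z(ξ)| < ∞}. There exists C such that for all Z, V ∈ F, ‖ |ξ|^(−1/2) (|Z|∗|V|) ‖_F ≤ C ‖Z‖_F ‖V‖_F. -/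
/-!
Almost everywhere `Z ≤ ‖Z‖_a |·|^(-a)` and `V ≤ ‖V‖_b |·|^(-b)`, so `Z ∗ V` is dominated by
`‖Z‖_a ‖V‖_b` times the convolution of two Riesz kernels. In dimension `d` with `a, b < d < a + b`
that convolution is at most `C |ξ|^(d - a - b)`: on the balls of radius `|ξ|/2` around `0` and `ξ`
one factor is bounded and the other is locally integrable since `a, b < d`; off these balls
`|ξ - η| ≥ |η|/3`, and `|η|^(-(a + b))` is integrable at infinity since `a + b > d`. The radial
integrals are computed in polar coordinates. For `d = 3`, `a = b = 5/2` the bound is `C |ξ|^(-2)`,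
which the weight `|ξ|^(5/2 - 1/2)` exactly compensates.
-/

open MeasureTheory Measure Set Metric
open scoped ENNReal NNReal

noncomputable section

def rieszKernel {E : Type*} [NormedAddCommGroup E] (a : ℝ) (x : E) : ℝ≥0∞ :=
  ‖x‖ₑ ^ (-a)

/-- The paper's norm `‖·‖_F` is `weightedSupNorm volume (5/2)`. -/
def weightedSupNorm {E : Type*} [NormedAddCommGroup E] [MeasurableSpace E] (μ : Measure E)
    (p : ℝ) (Z : E → ℝ≥0∞) : ℝ≥0∞ :=
  essSup (fun ξ => ENNReal.ofReal (‖ξ‖ ^ p) * Z ξ) μ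

theorem rieszKernel_of_ne_zero {E : Type*} [NormedAddCommGroup E] {x : E} (hx : x ≠ 0) (a : ℝ) :
    rieszKernel a x = ENNReal.ofReal (‖x‖ ^ (-a)) := by
  rw [rieszKernel, ← ofReal_norm, ENNReal.ofReal_rpow_of_pos (norm_pos_iff.2 hx)]

theorem measurable_rieszKernel {E : Type*} [NormedAddCommGroup E] [MeasurableSpace E]
    [OpensMeasurableSpace E] (a : ℝ) : Measurable (rieszKernel (E := E) a) :=
  measurable_enorm.pow_const _

theorem ENNReal.rpow_neg_le_rpow_neg {x y : ℝ≥0∞} {a : ℝ} (ha : 0 ≤ a) (hxy : x ≤ y) :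
    y ^ (-a) ≤ x ^ (-a) := by
  rw [ENNReal.rpow_neg, ENNReal.rpow_neg]
  exact ENNReal.inv_le_inv.2 (ENNReal.rpow_le_rpow hxy ha)

theorem ENNReal.ofReal_rpow_mul_ofReal_rpow {r : ℝ} (hr : 0 < r) (s t : ℝ) :
    ENNReal.ofReal (r ^ s) * ENNReal.ofReal r ^ t = ENNReal.ofReal (r ^ (s + t)) := by
  rw [ENNReal.ofReal_rpow_of_pos hr, ← ENNReal.ofReal_mul (by positivity), Real.rpow_add hr]

theorem Real.rpow_neg_mul_rpow_neg_le_of_le_mul {x y c a b : ℝ} (hx : 0 < x) (hc : 0 < c)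
    (hb : 0 ≤ b) (hxy : x ≤ c * y) :
    x ^ (-a) * y ^ (-b) ≤ c ^ b * x ^ (-(a + b)) := by
  have hy : y ^ (-b) ≤ c ^ b * x ^ (-b) :=
    calc y ^ (-b) ≤ (x / c) ^ (-b) :=
          Real.rpow_le_rpow_of_nonpos (by positivity) ((div_le_iff₀' hc).2 hxy) (by linarith)
      _ = c ^ b * x ^ (-b) := by
          rw [Real.div_rpow hx.le hc.le, Real.rpow_neg hc.le, div_inv_eq_mul, mul_comm]
  calc x ^ (-a) * y ^ (-b) ≤ x ^ (-a) * (c ^ b * x ^ (-b)) := by gcongr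
    _ = c ^ b * x ^ (-(a + b)) := by rw [neg_add, Real.rpow_add hx]; ring

theorem lintegral_Ioc_rpow {s R : ℝ} (hs : -1 < s) (hR : 0 ≤ R) :
    ∫⁻ r in Ioc 0 R, ENNReal.ofReal (r ^ s) = ENNReal.ofReal (R ^ (s + 1) / (s + 1)) := by
  rw [← ofReal_integral_eq_lintegral_ofReal, ← intervalIntegral.integral_of_le hR,
    integral_rpow (.inl hs), Real.zero_rpow (by linarith), sub_zero]
  · exact (intervalIntegrable_iff_integrableOn_Ioc_of_le hR).1
      (intervalIntegral.intervalIntegrable_rpow' hs)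
  · filter_upwards [ae_restrict_mem measurableSet_Ioc] with r hr using Real.rpow_nonneg hr.1.le _

theorem lintegral_Ioi_rpow {s R : ℝ} (hs : s < -1) (hR : 0 < R) :
    ∫⁻ r in Ioi R, ENNReal.ofReal (r ^ s) = ENNReal.ofReal (-R ^ (s + 1) / (s + 1)) := by
  rw [← integral_Ioi_rpow_of_lt hs hR,
    ofReal_integral_eq_lintegral_ofReal (integrableOn_Ioi_rpow_of_lt hs hR)]
  filter_upwards [ae_restrict_mem measurableSet_Ioi] with r hr
    using Real.rpow_nonneg (hR.trans hr).le _

section RieszKernel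

variable {E : Type*} [NormedAddCommGroup E] [NormedSpace ℝ E] [FiniteDimensional ℝ E]
  [Nontrivial E] [MeasurableSpace E] [BorelSpace E] (μ : Measure E) [μ.IsAddHaarMeasure]

local notation "dim" => Module.finrank ℝ

theorem lintegral_fun_norm_addHaar {g : ℝ → ℝ≥0∞} (hg : Measurable g) :
    ∫⁻ x, g ‖x‖ ∂μ =
      μ.toSphere univ * ∫⁻ r in Ioi 0, ENNReal.ofReal (r ^ ((dim E : ℝ) - 1)) * g r := by
  have hcast : (dim E : ℝ) - 1 = (dim E - 1 : ℕ) := by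
    rw [Nat.cast_sub Module.finrank_pos, Nat.cast_one]
  have hgm : Measurable fun p : sphere (0 : E) 1 × Ioi (0 : ℝ) => g p.2 :=
    hg.comp (measurable_subtype_coe.comp measurable_snd)
  calc ∫⁻ x, g ‖x‖ ∂μ = ∫⁻ x : ({0}ᶜ : Set E), g ‖x.1‖ ∂μ.comap Subtype.val := by
        rw [lintegral_subtype_comap (measurableSet_singleton _).compl fun x => g ‖x‖,
          restrict_compl_singleton]
    _ = ∫⁻ p, g p.2 ∂μ.toSphere.prod (volumeIoiPow (dim E - 1)) := by
        rw [← μ.measurePreserving_homeomorphUnitSphereProd.lintegral_comp hgm]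
        simp [homeomorphUnitSphereProd_apply_snd_coe]
    _ = μ.toSphere univ * ∫⁻ r, g r ∂volumeIoiPow (dim E - 1) := by
        simp only [lintegral_prod _ hgm.aemeasurable, lintegral_const, mul_comm]
    _ = _ := by
        rw [volumeIoiPow, lintegral_withDensity_eq_lintegral_mul _
          (measurable_subtype_coe.pow_const _).ennreal_ofReal
          (show Measurable fun r : Ioi (0 : ℝ) => g r from hg.comp measurable_subtype_coe),
          hcast]
        simp_rw [Real.rpow_natCast]
        exact congrArg _ (lintegral_subtype_comap measurableSet_Ioi
          fun r => ENNReal.ofReal (r ^ (dim E - 1)) * g r)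

theorem setLIntegral_preimage_norm_addHaar {g : ℝ → ℝ≥0∞} (hg : Measurable g) {t : Set ℝ}
    (ht : MeasurableSet t) :
    ∫⁻ x in norm ⁻¹' t, g ‖x‖ ∂μ =
      μ.toSphere univ * ∫⁻ r in t ∩ Ioi 0, ENNReal.ofReal (r ^ ((dim E : ℝ) - 1)) * g r := by
  have hind : (norm ⁻¹' t).indicator (fun x : E => g ‖x‖) = fun x => t.indicator g ‖x‖ :=
    funext fun x => indicator_comp_right norm
  rw [← lintegral_indicator (measurable_norm ht), hind,
    lintegral_fun_norm_addHaar μ (hg.indicator ht), ← restrict_restrict ht,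
    ← lintegral_indicator ht]
  simp_rw [indicator_mul_right]

theorem setLIntegral_closedBall_rieszKernel {s R : ℝ} (hs : s < dim E) (hR : 0 ≤ R) :
    ∫⁻ x in closedBall (0 : E) R, rieszKernel s x ∂μ =
      μ.toSphere univ * ENNReal.ofReal (R ^ (dim E - s) / (dim E - s)) := by
  have hball : closedBall (0 : E) R = norm ⁻¹' Iic R := by ext; simp
  simp_rw [hball, rieszKernel, ← ofReal_norm]
  rw [setLIntegral_preimage_norm_addHaar μ (ENNReal.measurable_ofReal.pow_const _)
      measurableSet_Iic, Iic_inter_Ioi, setLIntegral_congr_fun measurableSet_Ioc fun r hr =>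
      ENNReal.ofReal_rpow_mul_ofReal_rpow hr.1 _ _, lintegral_Ioc_rpow (by linarith) hR]
  ring_nf

theorem setLIntegral_compl_closedBall_rieszKernel {s R : ℝ} (hs : dim E < s) (hR : 0 < R) :
    ∫⁻ x in (closedBall (0 : E) R)ᶜ, rieszKernel s x ∂μ =
      μ.toSphere univ * ENNReal.ofReal (R ^ (dim E - s) / (s - dim E)) := by
  have hball : (closedBall (0 : E) R)ᶜ = norm ⁻¹' Ioi R := by ext; simp
  simp_rw [hball, rieszKernel, ← ofReal_norm]
  rw [setLIntegral_preimage_norm_addHaar μ (ENNReal.measurable_ofReal.pow_const _)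
      measurableSet_Ioi, Ioi_inter_Ioi, max_eq_left hR.le,
    setLIntegral_congr_fun measurableSet_Ioi fun r hr =>
      ENNReal.ofReal_rpow_mul_ofReal_rpow (hR.trans hr) _ _, lintegral_Ioi_rpow (by linarith) hR,
    ← neg_div_neg_eq, neg_neg]
  ring_nf

variable {ξ : E} {a b R : ℝ}

theorem setLIntegral_closedBall_zero_rieszKernel_mul_le (ha : a < dim E) (hb : 0 ≤ b)
    (hR : 0 < R) (hξ : 2 * R ≤ ‖ξ‖) :
    ∫⁻ η in closedBall 0 R, rieszKernel a η * rieszKernel b (ξ - η) ∂μ ≤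
      μ.toSphere univ * ENNReal.ofReal (R ^ (dim E - a - b) / (dim E - a)) := by
  have hfar : ∀ η ∈ closedBall (0 : E) R, rieszKernel b (ξ - η) ≤ ENNReal.ofReal (R ^ (-b)) := by
    intro η hη
    rw [rieszKernel, ← ENNReal.ofReal_rpow_of_pos hR, ← ofReal_norm]
    refine ENNReal.rpow_neg_le_rpow_neg hb (ENNReal.ofReal_le_ofReal ?_)
    linarith [norm_sub_norm_le ξ η, mem_closedBall_zero_iff.1 hη]
  calc _ ≤ ∫⁻ η in closedBall 0 R, rieszKernel a η * ENNReal.ofReal (R ^ (-b)) ∂μ :=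
        setLIntegral_mono' measurableSet_closedBall fun η hη => mul_le_mul_right (hfar η hη) _
    _ = μ.toSphere univ * ENNReal.ofReal (R ^ (dim E - a) / (dim E - a) * R ^ (-b)) := by
        rw [lintegral_mul_const' _ _ ENNReal.ofReal_ne_top,
          setLIntegral_closedBall_rieszKernel μ ha hR.le, mul_assoc,
          ← ENNReal.ofReal_mul (by have := Real.rpow_nonneg hR.le (dim E - a); positivity)]
    _ = _ := by rw [div_mul_eq_mul_div, ← Real.rpow_add hR, sub_eq_add_neg _ b]

theorem setLIntegral_closedBall_self_rieszKernel_mul_le (ha : 0 ≤ a) (hb : b < dim E)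
    (hR : 0 < R) (hξ : 2 * R ≤ ‖ξ‖) :
    ∫⁻ η in closedBall ξ R, rieszKernel a η * rieszKernel b (ξ - η) ∂μ ≤
      μ.toSphere univ * ENNReal.ofReal (R ^ (dim E - a - b) / (dim E - b)) := by
  have hpre : (fun η => ξ - η) ⁻¹' closedBall ξ R = closedBall 0 R := by
    ext η
    simp [dist_eq_norm]
  rw [← (Measure.measurePreserving_sub_left μ ξ).setLIntegral_comp_preimage_emb
    (MeasurableEquiv.subLeft ξ).measurableEmbedding, hpre]
  simp_rw [sub_sub_cancel, mul_comm (rieszKernel a _), sub_right_comm _ a b]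
  exact setLIntegral_closedBall_zero_rieszKernel_mul_le μ hb ha hR hξ

theorem setLIntegral_compl_rieszKernel_mul_le (hb : 0 ≤ b) (hab : dim E < a + b) (hR : 0 < R)
    (hξ : ‖ξ‖ ≤ 2 * R) :
    ∫⁻ η in (closedBall 0 R ∪ closedBall ξ R)ᶜ, rieszKernel a η * rieszKernel b (ξ - η) ∂μ ≤
      μ.toSphere univ * ENNReal.ofReal (3 ^ b * R ^ (dim E - a - b) / (a + b - dim E)) := by
  have hpoint : ∀ η ∈ (closedBall 0 R ∪ closedBall ξ R)ᶜ,
      rieszKernel a η * rieszKernel b (ξ - η) ≤ ENNReal.ofReal (3 ^ b) * rieszKernel (a + b) η := by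
    intro η hη
    simp only [compl_union, mem_inter_iff, mem_compl_iff, mem_closedBall, not_le, dist_eq_norm,
      sub_zero] at hη
    have hη0 : η ≠ 0 := norm_pos_iff.1 (hR.trans hη.1)
    have hξη : ξ - η ≠ 0 := by
      rw [← norm_pos_iff, norm_sub_rev]
      exact hR.trans hη.2
    rw [rieszKernel_of_ne_zero hη0, rieszKernel_of_ne_zero hξη, rieszKernel_of_ne_zero hη0,
      ← ENNReal.ofReal_mul (by positivity), ← ENNReal.ofReal_mul (by positivity)]
    refine ENNReal.ofReal_le_ofReal
      (Real.rpow_neg_mul_rpow_neg_le_of_le_mul (hR.trans hη.1) three_pos hb ?_)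
    linarith [norm_le_norm_add_norm_sub' η ξ, norm_sub_rev η ξ]
  calc _ ≤ ∫⁻ η in (closedBall 0 R ∪ closedBall ξ R)ᶜ,
        ENNReal.ofReal (3 ^ b) * rieszKernel (a + b) η ∂μ :=
        setLIntegral_mono' (measurableSet_closedBall.union measurableSet_closedBall).compl hpoint
    _ ≤ ∫⁻ η in (closedBall 0 R)ᶜ, ENNReal.ofReal (3 ^ b) * rieszKernel (a + b) η ∂μ :=
        lintegral_mono_set (compl_subset_compl.2 subset_union_left)
    _ = _ := by
        rw [lintegral_const_mul' _ _ ENNReal.ofReal_ne_top,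
          setLIntegral_compl_closedBall_rieszKernel μ hab hR, mul_left_comm,
          ← ENNReal.ofReal_mul (by positivity), mul_div_assoc, sub_sub]

theorem lintegral_rieszKernel_mul_rieszKernel_sub_le (ha : a < dim E) (hb : b < dim E)
    (hab : dim E < a + b) (hξ : ξ ≠ 0) :
    ∫⁻ η, rieszKernel a η * rieszKernel b (ξ - η) ∂μ ≤
      μ.toSphere univ * ENNReal.ofReal
        ((1 / (dim E - a) + 1 / (dim E - b) + 3 ^ b / (a + b - dim E)) *
          (‖ξ‖ / 2) ^ (dim E - a - b)) := by
  set R := ‖ξ‖ / 2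
  have hR : 0 < R := half_pos (norm_pos_iff.2 hξ)
  have h2R : 2 * R = ‖ξ‖ := mul_div_cancel₀ _ two_ne_zero
  have hda : 0 < dim E - a := by linarith
  have hdb : 0 < dim E - b := by linarith
  have habd : 0 < a + b - dim E := by linarith
  let near := closedBall (0 : E) R ∪ closedBall ξ R
  calc ∫⁻ η, rieszKernel a η * rieszKernel b (ξ - η) ∂μ
      = ∫⁻ η in near ∪ nearᶜ, rieszKernel a η * rieszKernel b (ξ - η) ∂μ := by
        rw [union_compl_self, restrict_univ]
    _ ≤ (∫⁻ η in closedBall 0 R, rieszKernel a η * rieszKernel b (ξ - η) ∂μ) +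
          (∫⁻ η in closedBall ξ R, rieszKernel a η * rieszKernel b (ξ - η) ∂μ) +
          ∫⁻ η in nearᶜ, rieszKernel a η * rieszKernel b (ξ - η) ∂μ :=
        (lintegral_union_le _ _ _).trans (add_le_add_left (lintegral_union_le _ _ _) _)
    _ ≤ μ.toSphere univ * ENNReal.ofReal (R ^ (dim E - a - b) / (dim E - a)) +
          μ.toSphere univ * ENNReal.ofReal (R ^ (dim E - a - b) / (dim E - b)) +
          μ.toSphere univ * ENNReal.ofReal (3 ^ b * R ^ (dim E - a - b) / (a + b - dim E)) := by
        gcongr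
        · exact setLIntegral_closedBall_zero_rieszKernel_mul_le μ ha (by linarith) hR h2R.le
        · exact setLIntegral_closedBall_self_rieszKernel_mul_le μ (by linarith) hb hR h2R.le
        · exact setLIntegral_compl_rieszKernel_mul_le μ (by linarith) hab hR h2R.ge
    _ = _ := by
        have := Real.rpow_nonneg hR.le (dim E - a - b)
        rw [← mul_add, ← mul_add, ← ENNReal.ofReal_add (by positivity) (by positivity),
          ← ENNReal.ofReal_add (by positivity) (by positivity)]
        congr 2
        ring

theorem exists_lconvolution_rieszKernel_le (ha : a < dim E) (hb : b < dim E)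
    (hab : dim E < a + b) :
    ∃ C : ℝ≥0, ∀ ξ : E, ξ ≠ 0 →
      (rieszKernel a ⋆ₗ[μ] rieszKernel b) ξ ≤ C * rieszKernel (a + b - dim E) ξ := by
  set K := 1 / (dim E - a) + 1 / (dim E - b) + 3 ^ b / (a + b - dim E)
  have hK : 0 ≤ K := by
    have hda : 0 < dim E - a := by linarith
    have hdb : 0 < dim E - b := by linarith
    have habd : 0 < a + b - dim E := by linarith
    positivity
  refine ⟨(μ.toSphere univ * ENNReal.ofReal (K * 2 ^ (a + b - dim E))).toNNReal, fun ξ hξ => ?_⟩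
  have hscale :
      (‖ξ‖ / 2) ^ (dim E - a - b) = 2 ^ (a + b - dim E) * ‖ξ‖ ^ (-(a + b - dim E)) := by
    rw [Real.div_rpow (norm_nonneg _) zero_le_two, show dim E - a - b = -(a + b - dim E) by ring,
      Real.rpow_neg zero_le_two, div_inv_eq_mul, mul_comm]
  rw [lconvolution_def]
  simp_rw [neg_add_eq_sub]
  calc _ ≤ _ := lintegral_rieszKernel_mul_rieszKernel_sub_le μ ha hb hab hξ
    _ = _ := by
      rw [ENNReal.coe_toNNReal (ENNReal.mul_ne_top (measure_ne_top _ _) ENNReal.ofReal_ne_top),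
        hscale, rieszKernel_of_ne_zero hξ, mul_assoc, ← ENNReal.ofReal_mul (by positivity),
        mul_assoc]

end RieszKernel

section WeightedSupNorm

variable {G : Type*} [NormedAddCommGroup G] [MeasurableSpace G] {μ : Measure G}

theorem ae_le_weightedSupNorm_mul_rieszKernel [NullSingletonClass μ] (p : ℝ) (Z : G → ℝ≥0∞) :
    ∀ᵐ x ∂μ, Z x ≤ weightedSupNorm μ p Z * rieszKernel p x := by
  filter_upwards [ae_le_essSup (f := fun ξ => ENNReal.ofReal (‖ξ‖ ^ p) * Z ξ) (μ := μ),
    Measure.ae_ne μ 0] with x hx hx0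
  set w := ENNReal.ofReal (‖x‖ ^ p)
  have hw : w ≠ 0 := (ENNReal.ofReal_pos.2 (Real.rpow_pos_of_pos (norm_pos_iff.2 hx0) p)).ne'
  rw [rieszKernel_of_ne_zero hx0, Real.rpow_neg (norm_nonneg _),
    ENNReal.ofReal_inv_of_pos (Real.rpow_pos_of_pos (norm_pos_iff.2 hx0) p), mul_comm]
  calc Z x = w⁻¹ * (w * Z x) := (ENNReal.inv_mul_cancel_left hw ENNReal.ofReal_ne_top).symm
    _ ≤ w⁻¹ * weightedSupNorm μ p Z := mul_le_mul_right hx _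

variable [BorelSpace G]

theorem lconvolution_const_mul_const_mul {f g : G → ℝ≥0∞} (hf : Measurable f)
    (hg : Measurable g) (c c' : ℝ≥0∞) (x : G) :
    ((fun y => c * f y) ⋆ₗ[μ] fun y => c' * g y) x = c * c' * (f ⋆ₗ[μ] g) x := by
  rw [lconvolution_def, lconvolution_def,
    ← lintegral_const_mul _ (show Measurable fun y => f y * g (-y + x) from
      hf.mul (hg.comp (measurable_neg.add_const x)))]
  congr 1
  ext y
  ring

variable [μ.IsAddLeftInvariant] [μ.IsNegInvariant]

theorem lconvolution_le_lconvolution_of_ae_le {f f' g g' : G → ℝ≥0∞} (hf : f ≤ᵐ[μ] f')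
    (hg : g ≤ᵐ[μ] g') (x : G) : (f ⋆ₗ[μ] g) x ≤ (f' ⋆ₗ[μ] g') x := by
  simp_rw [lconvolution_def, neg_add_eq_sub]
  refine lintegral_mono_ae ?_
  filter_upwards [hf, (Measure.measurePreserving_sub_left μ x).quasiMeasurePreserving.ae hg]
    with y hfy hgy
  exact mul_le_mul' hfy hgy

theorem weightedSupNorm_lconvolution_le [NullSingletonClass μ] {a b p : ℝ} {C : ℝ≥0∞}
    (hK : ∀ ξ : G, ξ ≠ 0 → (rieszKernel a ⋆ₗ[μ] rieszKernel b) ξ ≤ C * rieszKernel p ξ)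
    (Z V : G → ℝ≥0∞) :
    weightedSupNorm μ p (Z ⋆ₗ[μ] V) ≤ C * weightedSupNorm μ a Z * weightedSupNorm μ b V := by
  set A := weightedSupNorm μ a Z
  set B := weightedSupNorm μ b V
  refine essSup_le_of_ae_le _ ?_
  filter_upwards [Measure.ae_ne μ 0] with ξ hξ
  have hconv : (Z ⋆ₗ[μ] V) ξ ≤ A * B * (C * rieszKernel p ξ) :=
    calc (Z ⋆ₗ[μ] V) ξ
        ≤ ((fun x => A * rieszKernel a x) ⋆ₗ[μ] fun x => B * rieszKernel b x) ξ :=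
          lconvolution_le_lconvolution_of_ae_le (ae_le_weightedSupNorm_mul_rieszKernel a Z)
            (ae_le_weightedSupNorm_mul_rieszKernel b V) ξ
      _ = A * B * (rieszKernel a ⋆ₗ[μ] rieszKernel b) ξ :=
          lconvolution_const_mul_const_mul (measurable_rieszKernel a) (measurable_rieszKernel b)
            A B ξ
      _ ≤ A * B * (C * rieszKernel p ξ) := mul_le_mul_right (hK ξ hξ) _
  set w := ENNReal.ofReal (‖ξ‖ ^ p)
  have hw : w ≠ 0 := (ENNReal.ofReal_pos.2 (Real.rpow_pos_of_pos (norm_pos_iff.2 hξ) p)).ne'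
  calc w * (Z ⋆ₗ[μ] V) ξ ≤ w * (A * B * (C * rieszKernel p ξ)) := mul_le_mul_right hconv _
    _ = C * A * B * (w * w⁻¹) := by
        rw [rieszKernel_of_ne_zero hξ, Real.rpow_neg (norm_nonneg _),
          ENNReal.ofReal_inv_of_pos (Real.rpow_pos_of_pos (norm_pos_iff.2 hξ) p)]
        ring
    _ = C * A * B := by rw [ENNReal.mul_inv_cancel hw ENNReal.ofReal_ne_top, mul_one]

end WeightedSupNorm

theorem leJan_Sznitman_local_bilinear_estimate :
    ∃ C : ℝ≥0, 0 < C ∧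
      ∀ Z V : EuclideanSpace ℝ (Fin 3) → ℝ≥0∞, Measurable Z → Measurable V →
        essSup (fun ξ : EuclideanSpace ℝ (Fin 3) =>
            ENNReal.ofReal (‖ξ‖ ^ ((5 : ℝ) / 2)) *
              ((ENNReal.ofReal (‖ξ‖ ^ ((1 : ℝ) / 2)))⁻¹ * ∫⁻ η, Z (ξ - η) * V η)) volume
          ≤ C * essSup (fun ξ : EuclideanSpace ℝ (Fin 3) =>
                ENNReal.ofReal (‖ξ‖ ^ ((5 : ℝ) / 2)) * Z ξ) volume
              * essSup (fun ξ : EuclideanSpace ℝ (Fin 3) =>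
                ENNReal.ofReal (‖ξ‖ ^ ((5 : ℝ) / 2)) * V ξ) volume := by
  have hdim : (Module.finrank ℝ (EuclideanSpace ℝ (Fin 3)) : ℝ) = 3 := by simp
  obtain ⟨C, hC⟩ := exists_lconvolution_rieszKernel_le
    (volume : Measure (EuclideanSpace ℝ (Fin 3))) (a := 5 / 2) (b := 5 / 2)
    (by rw [hdim]; norm_num) (by rw [hdim]; norm_num) (by rw [hdim]; norm_num)
  rw [hdim, show (5 / 2 + 5 / 2 - 3 : ℝ) = 2 by norm_num] at hC
  refine ⟨C + 1, by positivity, fun Z V _ _ => ?_⟩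
  have hweight : ∀ t : ℝ, 0 < t →
      ENNReal.ofReal (t ^ ((5 : ℝ) / 2)) * (ENNReal.ofReal (t ^ ((1 : ℝ) / 2)))⁻¹ =
        ENNReal.ofReal (t ^ (2 : ℝ)) := fun t ht => by
    rw [← ENNReal.ofReal_inv_of_pos (by positivity), ← ENNReal.ofReal_mul (by positivity),
      ← Real.rpow_neg ht.le, ← Real.rpow_add ht]
    norm_num
  have hconv : (fun ξ : EuclideanSpace ℝ (Fin 3) => ENNReal.ofReal (‖ξ‖ ^ ((5 : ℝ) / 2)) *
      ((ENNReal.ofReal (‖ξ‖ ^ ((1 : ℝ) / 2)))⁻¹ * ∫⁻ η, Z (ξ - η) * V η)) =ᵐ[volume]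
        fun ξ => ENNReal.ofReal (‖ξ‖ ^ (2 : ℝ)) * (V ⋆ₗ Z) ξ := by
    filter_upwards [Measure.ae_ne volume 0] with ξ hξ
    simp_rw [← mul_assoc, hweight ‖ξ‖ (norm_pos_iff.2 hξ), lconvolution_def, neg_add_eq_sub,
      mul_comm (V _)]
  calc _ = weightedSupNorm volume 2 (V ⋆ₗ Z) := essSup_congr_ae hconv
    _ ≤ C * weightedSupNorm volume ((5 : ℝ) / 2) V * weightedSupNorm volume ((5 : ℝ) / 2) Z :=
        weightedSupNorm_lconvolution_le hC V Z
    _ ≤ _ := by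
        rw [mul_right_comm]
        exact mul_le_mul' (mul_le_mul' (by exact_mod_cast le_self_add) le_rfl) le_rfl
end
end

section
/- Let g, k : ℝᵈ → ℝ with |g(x)| ≤ k(x) for all x, where k is integrable, radial, and radially non-increasing (k(x) = k₀(|x|) with k₀ non-increasing). Then for every locally integrable f and every x, |(g ∗ f)(x)| ≤ ‖k‖_{L¹} · M_f(x), where M_f is the Hardy–Littlewood maximal function M_f(x) = sup_{r>0} (1/|B(x,r)|) ∫_{B(x,r)} |f(y)| dy. -/
open MeasureTheory Set Filter Metric Topology
open scoped ENNReal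

/-!
The superlevel sets `{y | t < k (x - y)}` of a radial, radially non-increasing kernel centred at
`x` are open balls, closed balls or the whole space around `x`. On each of them the integral of
`|f|` is at most its measure times the maximal function at `x` (closed balls and the whole space
are monotone limits of open balls). Integrating over `t` by the layer-cake formula, for the measure
with density `|f|` on the left and for Lebesgue measure on the right, gives the bound, since
`∫ k (x - y) dy = ∫ k`.
-/

section MaximalFunction

variable {α : Type*} [PseudoMetricSpace α] [MeasurableSpace α]

noncomputable def maximalFunction (μ : Measure α) (F : α → ℝ≥0∞) (x : α) : ℝ≥0∞ :=
  ⨆ (r : ℝ) (_ : 0 < r), (μ (ball x r))⁻¹ * ∫⁻ y in ball x r, F y ∂μ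

variable [ProperSpace α] {μ : Measure α} [IsFiniteMeasureOnCompacts μ]

theorem setLIntegral_ball_le_mul_maximalFunction (F : α → ℝ≥0∞) (x : α) {r : ℝ} (hr : 0 < r) :
    ∫⁻ y in ball x r, F y ∂μ ≤ μ (ball x r) * maximalFunction μ F x := by
  rcases eq_or_ne (μ (ball x r)) 0 with h0 | h0
  · simp [Measure.restrict_eq_zero.2 h0]
  calc ∫⁻ y in ball x r, F y ∂μ
      = μ (ball x r) * ((μ (ball x r))⁻¹ * ∫⁻ y in ball x r, F y ∂μ) := by
        rw [← mul_assoc, ENNReal.mul_inv_cancel h0 measure_ball_lt_top.ne, one_mul]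
    _ ≤ μ (ball x r) * maximalFunction μ F x := by
        gcongr
        exact le_iSup₂ (f := fun r (_ : 0 < r) => (μ (ball x r))⁻¹ * ∫⁻ y in ball x r, F y ∂μ) r hr

theorem lintegral_le_mul_maximalFunction (F : α → ℝ≥0∞) (x : α) :
    ∫⁻ y, F y ∂μ ≤ μ univ * maximalFunction μ F x := by
  conv_lhs => rw [← setLIntegral_univ, ← iUnion_ball_nat_succ x, setLIntegral_iUnion_of_directed _
    (Monotone.directed_le fun m n h => ball_subset_ball (by exact_mod_cast Nat.succ_le_succ h))]
  refine iSup_le fun n => (setLIntegral_ball_le_mul_maximalFunction F x (by positivity)).trans ?_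
  gcongr
  exact subset_univ _

variable [OpensMeasurableSpace α]

theorem setLIntegral_closedBall_le_mul_maximalFunction (F : α → ℝ≥0∞) (x : α) {r : ℝ}
    (hr : 0 ≤ r) : ∫⁻ y in closedBall x r, F y ∂μ ≤ μ (closedBall x r) * maximalFunction μ F x := by
  rcases eq_or_ne (μ (closedBall x r)) 0 with h0 | h0
  · simp [Measure.restrict_eq_zero.2 h0]
  have hlim : Tendsto (fun r' => μ (ball x r')) (𝓝[>] r) (𝓝 (μ (closedBall x r))) := by
    rw [← biInter_gt_ball x r]
    exact tendsto_measure_biInter_gt (fun _ _ => measurableSet_ball.nullMeasurableSet)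
      (fun _ _ _ h => ball_subset_ball h) ⟨r + 1, by linarith, measure_ball_lt_top.ne⟩
  refine ge_of_tendsto (ENNReal.Tendsto.mul_const hlim (Or.inl h0)) ?_
  filter_upwards [self_mem_nhdsWithin] with r' (hr' : r < r')
  calc ∫⁻ y in closedBall x r, F y ∂μ ≤ ∫⁻ y in ball x r', F y ∂μ :=
        lintegral_mono_set (closedBall_subset_ball hr')
    _ ≤ μ (ball x r') * maximalFunction μ F x :=
        setLIntegral_ball_le_mul_maximalFunction F x (hr.trans_lt hr')

end MaximalFunction

section RadialSuperlevel

variable {α : Type*} [PseudoMetricSpace α] {φ₀ : ℝ → ℝ}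

theorem AntitoneOn.setOf_lt_comp_dist_eq (hφ₀ : AntitoneOn φ₀ (Ici 0)) (x : α) (t : ℝ) :
    {y | t < φ₀ (dist y x)} = univ ∨ ∃ r, 0 ≤ r ∧
      ({y | t < φ₀ (dist y x)} = ball x r ∨ {y | t < φ₀ (dist y x)} = closedBall x r) := by
  set T := {s : ℝ | 0 ≤ s ∧ t < φ₀ s}
  have mem_iff : ∀ y, y ∈ {y | t < φ₀ (dist y x)} ↔ dist y x ∈ T := fun y => by
    simp [T, dist_nonneg]
  have mem_of_le : ∀ {s s'}, s ∈ T → 0 ≤ s' → s' ≤ s → s' ∈ T := fun hs h0 hle =>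
    ⟨h0, hs.2.trans_le (hφ₀ h0 hs.1 hle)⟩
  by_cases hbdd : BddAbove T
  swap
  · refine Or.inl (eq_univ_of_forall fun y => (mem_iff y).2 ?_)
    obtain ⟨s, hs, hlt⟩ := not_bddAbove_iff.1 hbdd (dist y x)
    exact mem_of_le hs dist_nonneg hlt.le
  refine Or.inr ?_
  rcases T.eq_empty_or_nonempty with hT | hT
  · refine ⟨0, le_rfl, Or.inl ?_⟩
    ext y
    simp [mem_iff, hT]
  refine ⟨sSup T, hT.some_mem.1.trans (le_csSup hbdd hT.some_mem), ?_⟩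
  by_cases hr : sSup T ∈ T
  · refine Or.inr (ext fun y => ?_)
    rw [mem_iff, mem_closedBall]
    exact ⟨fun h => le_csSup hbdd h, fun h => mem_of_le hr dist_nonneg h⟩
  · refine Or.inl (ext fun y => ?_)
    rw [mem_iff, mem_ball]
    refine ⟨fun h => (le_csSup hbdd h).lt_of_ne fun he => hr (he ▸ h), fun h => ?_⟩
    obtain ⟨s, hs, hlt⟩ := exists_lt_of_lt_csSup hT h
    exact mem_of_le hs dist_nonneg hlt.le

variable [MeasurableSpace α]

theorem AntitoneOn.measurable_comp_dist [OpensMeasurableSpace α]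
    (hφ₀ : AntitoneOn φ₀ (Ici 0)) (x : α) : Measurable fun y => φ₀ (dist y x) :=
  measurable_of_Ioi fun t => by
    rcases hφ₀.setOf_lt_comp_dist_eq x t with h | ⟨r, -, h | h⟩ <;>
      simp only [preimage, mem_Ioi, h, MeasurableSet.univ, measurableSet_ball,
        measurableSet_closedBall]

theorem AntitoneOn.setLIntegral_superlevel_le_mul_maximalFunction [ProperSpace α]
    [OpensMeasurableSpace α] {μ : Measure α} [IsFiniteMeasureOnCompacts μ]
    (hφ₀ : AntitoneOn φ₀ (Ici 0)) (F : α → ℝ≥0∞) (x : α) (t : ℝ) :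
    ∫⁻ y in {y | t < φ₀ (dist y x)}, F y ∂μ ≤
      μ {y | t < φ₀ (dist y x)} * maximalFunction μ F x := by
  rcases hφ₀.setOf_lt_comp_dist_eq x t with h | ⟨r, hr, h | h⟩ <;> rw [h]
  · rw [Measure.restrict_univ]
    exact lintegral_le_mul_maximalFunction F x
  · rcases hr.eq_or_lt with rfl | hr
    · simp
    · exact setLIntegral_ball_le_mul_maximalFunction F x hr
  · exact setLIntegral_closedBall_le_mul_maximalFunction F x hr

end RadialSuperlevel

theorem lintegral_ofReal_mul_le_of_setLIntegral_superlevel_le {β : Type*} [MeasurableSpace β]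
    {ν : Measure β} {φ : β → ℝ} {F : β → ℝ≥0∞} (hφ_nonneg : ∀ y, 0 ≤ φ y) (hφ : Measurable φ)
    (hF : AEMeasurable F ν) {c : ℝ≥0∞}
    (h : ∀ t, 0 < t → ∫⁻ y in {y | t < φ y}, F y ∂ν ≤ ν {y | t < φ y} * c) :
    ∫⁻ y, ENNReal.ofReal (φ y) * F y ∂ν ≤ (∫⁻ y, ENNReal.ofReal (φ y) ∂ν) * c := by
  calc ∫⁻ y, ENNReal.ofReal (φ y) * F y ∂ν
      = ∫⁻ y, ENNReal.ofReal (φ y) ∂ν.withDensity F := by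
        rw [lintegral_withDensity_eq_lintegral_mul₀ hF hφ.ennreal_ofReal.aemeasurable]
        simp only [Pi.mul_apply, mul_comm]
    _ = ∫⁻ t in Ioi 0, ν.withDensity F {y | t < φ y} :=
        lintegral_eq_lintegral_meas_lt _ (ae_of_all _ hφ_nonneg) hφ.aemeasurable
    _ ≤ ∫⁻ t in Ioi 0, ν {y | t < φ y} * c := by
        refine setLIntegral_mono' measurableSet_Ioi fun t (ht : 0 < t) => ?_
        rw [withDensity_apply _ (measurableSet_lt measurable_const hφ)]
        exact h t ht
    _ = (∫⁻ t in Ioi 0, ν {y | t < φ y}) * c :=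
        lintegral_mul_const c (Antitone.measurable fun a b hab =>
          measure_mono fun y (hy : b < φ y) => hab.trans_lt hy)
    _ = (∫⁻ y, ENNReal.ofReal (φ y) ∂ν) * c := by
        rw [lintegral_eq_lintegral_meas_lt _ (ae_of_all _ hφ_nonneg) hφ.aemeasurable]

theorem convolution_le_maximal_of_radial_decreasing_general
    (d : ℕ) (g k : EuclideanSpace ℝ (Fin d) → ℝ)
    (hgk : ∀ x, |g x| ≤ k x)
    (k₀ : ℝ → ℝ) (hk_rad : ∀ x, k x = k₀ ‖x‖)
    (hk₀ : AntitoneOn k₀ (Set.Ici (0 : ℝ)))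
    (f : EuclideanSpace ℝ (Fin d) → ℝ) (hf : LocallyIntegrable f volume) :
    ∀ x : EuclideanSpace ℝ (Fin d),
      (∫⁻ y, ENNReal.ofReal |g (x - y)| * ENNReal.ofReal |f y|) ≤
        (∫⁻ y, ENNReal.ofReal (k y)) *
          ⨆ (r : ℝ) (_ : 0 < r),
            (volume (Metric.ball x r))⁻¹ *
              ∫⁻ y in Metric.ball x r, ENNReal.ofReal |f y| := by
  intro x
  have hk_dist : ∀ y, k (x - y) = k₀ (dist y x) := fun y => by rw [hk_rad, dist_eq_norm']
  have hF : AEMeasurable (fun y => ENNReal.ofReal |f y|) :=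
    hf.aestronglyMeasurable.aemeasurable.abs.ennreal_ofReal
  calc ∫⁻ y, ENNReal.ofReal |g (x - y)| * ENNReal.ofReal |f y|
      ≤ ∫⁻ y, ENNReal.ofReal (k₀ (dist y x)) * ENNReal.ofReal |f y| :=
        lintegral_mono fun y => by grw [← hk_dist, hgk]
    _ ≤ (∫⁻ y, ENNReal.ofReal (k₀ (dist y x))) *
          maximalFunction volume (fun y => ENNReal.ofReal |f y|) x :=
        lintegral_ofReal_mul_le_of_setLIntegral_superlevel_le
          (fun y => hk_dist y ▸ (abs_nonneg _).trans (hgk _)) (hk₀.measurable_comp_dist x) hF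
          fun t _ => hk₀.setLIntegral_superlevel_le_mul_maximalFunction _ x t
    _ = (∫⁻ y, ENNReal.ofReal (k y)) *
          maximalFunction volume (fun y => ENNReal.ofReal |f y|) x := by
        simp only [← hk_dist]
        rw [lintegral_sub_left_eq_self (fun y => ENNReal.ofReal (k y)) x]

theorem convolution_le_maximal_of_radial_decreasing
    (d : ℕ) (g k : EuclideanSpace ℝ (Fin d) → ℝ)
    (hk_int : Integrable k)
    (hgk : ∀ x, |g x| ≤ k x)
    (k₀ : ℝ → ℝ) (hk_rad : ∀ x, k x = k₀ ‖x‖)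
    (hk₀ : AntitoneOn k₀ (Set.Ici (0 : ℝ)))
    (f : EuclideanSpace ℝ (Fin d) → ℝ) (hf : LocallyIntegrable f volume) :
    ∀ x : EuclideanSpace ℝ (Fin d),
      (∫⁻ y, ENNReal.ofReal |g (x - y)| * ENNReal.ofReal |f y|) ≤
        (∫⁻ y, ENNReal.ofReal (k y)) *
          ⨆ (r : ℝ) (_ : 0 < r),
            (volume (Metric.ball x r))⁻¹ *
              ∫⁻ y in Metric.ball x r, ENNReal.ofReal |f y| :=
  convolution_le_maximal_of_radial_decreasing_general d g k hgk k₀ hk_rad hk₀ f hf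
end

section
/- Let u, v : (0,∞) × ℝ³ → ℝ be measurable and set U(y) = sup_{s>0} |u(s,y)|, V(y) = sup_{s>0} |v(s,y)|. If the bilinear kernel bound |K(t,x−y)| ≤ C (√t + |x−y|)^(−4) holds, then |∫₀ᵗ ∫_{ℝ³} K(t−s, x−y) u(s,y) v(s,y) dy ds| ≤ C' ∫_{ℝ³} |x−y|^(−2) U(y) V(y) dy for all t > 0, x ∈ ℝ³, where C' depends only on C (using ∫₀^∞ (√σ + |x−y|)^(−4) dσ = c |x−y|^(−2)). -/
/-!
Bound the kernel by the measurable majorant `C ((t - s + |x - y|²)²)⁻¹`, using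
`(√σ + d)⁴ ≥ (σ + d²)²`, and the product `u v` by `U V`. Tonelli then moves the time integral
inside, and `∫₀ᵗ ((t - s + d²)²)⁻¹ ds ≤ d⁻²`.

Since `u` and `v` are not assumed measurable, `U V` is replaced in Tonelli's theorem by its
measurable lower envelope: the measurable `W' ≤ U V` that a.e. dominates every measurable minorant
of `U V`. Against a finite measurable density `w`, the lower integral of `w U V` equals that of
`U V` for the measure `w μ`, which is attained by a measurable minorant, hence is at most `∫ w W'`.
-/

open MeasureTheory Set
open scoped ENNReal

namespace MeasureTheory

variable {α β : Type*} [MeasurableSpace α] [MeasurableSpace β]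

theorem exists_measurable_le_forall_measurable_le_ae_le {μ : Measure α} [SigmaFinite μ]
    (f : α → ℝ≥0∞) :
    ∃ g, Measurable g ∧ g ≤ f ∧ ∀ φ, Measurable φ → φ ≤ f → φ ≤ᵐ[μ] g := by
  obtain ⟨g, hgm, hgf, hg⟩ := exists_measurable_le_withDensity_eq μ f
  refine ⟨g, hgm, hgf, fun φ hφm hφf => ?_⟩
  have h : μ.withDensity (g ⊔ φ) = μ.withDensity g :=
    le_antisymm (hg ▸ withDensity_mono (.of_forall (sup_le hgf hφf)))
      (withDensity_mono (.of_forall fun _ => le_sup_left))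
  filter_upwards [(withDensity_eq_iff_of_sigmaFinite (hgm.sup hφm).aemeasurable
    hgm.aemeasurable).1 h] with a ha
  exact ha ▸ le_sup_right

theorem lintegral_mul_le_of_forall_measurable_le_ae_le {μ : Measure α} {f g w : α → ℝ≥0∞}
    (hw : Measurable w) (hw_fin : ∀ᵐ a ∂μ, w a < ∞)
    (hg : ∀ φ, Measurable φ → φ ≤ f → φ ≤ᵐ[μ] g) :
    ∫⁻ a, w a * f a ∂μ ≤ ∫⁻ a, w a * g a ∂μ := by
  obtain ⟨φ, hφm, hφf, hφ⟩ := exists_measurable_le_lintegral_eq (μ.withDensity w) f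
  calc ∫⁻ a, w a * f a ∂μ = ∫⁻ a, f a ∂μ.withDensity w :=
        (lintegral_withDensity_eq_lintegral_mul_non_measurable μ hw hw_fin f).symm
    _ = ∫⁻ a, φ a ∂μ.withDensity w := hφ
    _ ≤ ∫⁻ a, g a ∂μ.withDensity w :=
        lintegral_mono_ae ((withDensity_absolutelyContinuous μ w).ae_le (hg φ hφm hφf))
    _ = ∫⁻ a, w a * g a ∂μ := lintegral_withDensity_eq_lintegral_mul_non_measurable μ hw hw_fin g

theorem lintegral_lintegral_mul_le {μ : Measure α} {ν : Measure β} [SFinite μ] [SigmaFinite ν]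
    {k : α → β → ℝ≥0∞} (hk : Measurable (Function.uncurry k)) (hk_fin : ∀ a b, k a b ≠ ∞)
    (f : β → ℝ≥0∞) :
    ∫⁻ a, ∫⁻ b, k a b * f b ∂ν ∂μ ≤ ∫⁻ b, (∫⁻ a, k a b ∂μ) * f b ∂ν := by
  obtain ⟨g, hgm, hgf, hg⟩ := exists_measurable_le_forall_measurable_le_ae_le (μ := ν) f
  calc ∫⁻ a, ∫⁻ b, k a b * f b ∂ν ∂μ ≤ ∫⁻ a, ∫⁻ b, k a b * g b ∂ν ∂μ :=
        lintegral_mono fun a => lintegral_mul_le_of_forall_measurable_le_ae_le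
          hk.of_uncurry_left (.of_forall fun b => (hk_fin a b).lt_top) hg
    _ = ∫⁻ b, (∫⁻ a, k a b ∂μ) * g b ∂ν := by
        rw [lintegral_lintegral_swap (hk.mul (hgm.comp measurable_snd)).aemeasurable]
        exact lintegral_congr fun b => lintegral_mul_const _ hk.of_uncurry_right
    _ ≤ ∫⁻ b, (∫⁻ a, k a b ∂μ) * f b ∂ν := lintegral_mono fun b => mul_le_mul_right (hgf b) _

end MeasureTheory

lemma sqrt_add_rpow_neg_four_le {σ d : ℝ} (hσ : 0 < σ) (hd : 0 ≤ d) :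
    (√σ + d) ^ (-(4 : ℝ)) ≤ ((σ + d ^ 2) ^ 2)⁻¹ := by
  have h_sq : σ + d ^ 2 ≤ (√σ + d) ^ 2 := by
    nlinarith [Real.sq_sqrt hσ.le, Real.sqrt_nonneg σ]
  have h_four : (σ + d ^ 2) ^ 2 ≤ (√σ + d) ^ 4 := by
    calc (σ + d ^ 2) ^ 2 ≤ ((√σ + d) ^ 2) ^ 2 := pow_le_pow_left₀ (by positivity) h_sq 2
      _ = (√σ + d) ^ 4 := by ring
  rw [Real.rpow_neg (by positivity), show (4 : ℝ) = (4 : ℕ) by norm_num, Real.rpow_natCast]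
  exact inv_anti₀ (by positivity) h_four

lemma lintegral_Ioo_inv_sub_add_sq_le {c : ℝ} (hc : 0 < c) (t : ℝ) :
    ∫⁻ s in Ioo 0 t, ENNReal.ofReal (((t - s + c) ^ 2)⁻¹) ≤ ENNReal.ofReal c⁻¹ := by
  rcases le_or_gt t 0 with ht | ht
  · simp [Ioo_eq_empty_of_le ht]
  have h_pos : ∀ s ∈ Icc 0 t, 0 < t - s + c := fun s hs => by linarith [hs.2]
  have h_cont : ContinuousOn (fun s => ((t - s + c) ^ 2)⁻¹) (Icc 0 t) :=
    ContinuousOn.inv₀ (by fun_prop) fun s hs => (pow_pos (h_pos s hs) 2).ne'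
  have h_deriv : ∀ s ∈ uIcc 0 t,
      HasDerivAt (fun s => (t - s + c)⁻¹) (((t - s + c) ^ 2)⁻¹) s := by
    intro s hs
    rw [uIcc_of_le ht.le] at hs
    simpa using (((hasDerivAt_id s).const_sub t).add_const c).fun_inv (h_pos s hs).ne'
  calc ∫⁻ s in Ioo 0 t, ENNReal.ofReal (((t - s + c) ^ 2)⁻¹)
      = ENNReal.ofReal (∫ s in 0..t, ((t - s + c) ^ 2)⁻¹) := by
        rw [intervalIntegral.integral_of_le ht.le, integral_Ioc_eq_integral_Ioo,
          ofReal_integral_eq_lintegral_ofReal (h_cont.integrableOn_Icc.mono_set Ioo_subset_Icc_self)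
            (.of_forall fun s => by positivity)]
    _ = ENNReal.ofReal (c⁻¹ - (t + c)⁻¹) := by
        rw [intervalIntegral.integral_eq_sub_of_hasDerivAt h_deriv
          (h_cont.intervalIntegrable_of_Icc ht.le)]
        simp
    _ ≤ ENNReal.ofReal c⁻¹ :=
        ENNReal.ofReal_le_ofReal (sub_le_self _ (inv_nonneg.2 (by linarith)))

theorem bilinear_kernel_dominated_by_riesz (C : ℝ) (hC : 0 < C) :
    ∃ C' : ℝ, 0 < C' ∧
      ∀ (K : ℝ → EuclideanSpace ℝ (Fin 3) → ℝ)
        (u v : ℝ → EuclideanSpace ℝ (Fin 3) → ℝ),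
        (∀ t : ℝ, 0 < t → ∀ z, |K t z| ≤ C * (Real.sqrt t + ‖z‖) ^ (-(4 : ℝ))) →
        ∀ t : ℝ, 0 < t → ∀ x : EuclideanSpace ℝ (Fin 3),
          (∫⁻ s in Set.Ioo (0 : ℝ) t, ∫⁻ y,
              ENNReal.ofReal |K (t - s) (x - y)| *
                (ENNReal.ofReal |u s y| * ENNReal.ofReal |v s y|))
            ≤ ENNReal.ofReal C' *
                ∫⁻ y, ENNReal.ofReal (‖x - y‖ ^ (-(2 : ℝ))) *
                  ((⨆ (s : ℝ) (_ : 0 < s), ENNReal.ofReal |u s y|) *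
                    ⨆ (s : ℝ) (_ : 0 < s), ENNReal.ofReal |v s y|) := by
  refine ⟨C, hC, fun K u v hK t _ x => ?_⟩
  let U y := ⨆ (s : ℝ) (_ : 0 < s), ENNReal.ofReal |u s y|
  let V y := ⨆ (s : ℝ) (_ : 0 < s), ENNReal.ofReal |v s y|
  let k : ℝ → EuclideanSpace ℝ (Fin 3) → ℝ≥0∞ := fun s y =>
    ENNReal.ofReal (C * ((t - s + ‖x - y‖ ^ 2) ^ 2)⁻¹)
  have h_pointwise : ∀ s ∈ Ioo 0 t, ∀ y, ENNReal.ofReal |K (t - s) (x - y)| *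
      (ENNReal.ofReal |u s y| * ENNReal.ofReal |v s y|) ≤ k s y * (U y * V y) := fun s hs y =>
    mul_le_mul' (ENNReal.ofReal_le_ofReal <| (hK _ (sub_pos.2 hs.2) _).trans <|
        mul_le_mul_of_nonneg_left (sqrt_add_rpow_neg_four_le (sub_pos.2 hs.2) (norm_nonneg _))
          hC.le)
      (mul_le_mul' (le_iSup₂ (f := fun s (_ : 0 < s) => ENNReal.ofReal |u s y|) s hs.1)
        (le_iSup₂ (f := fun s (_ : 0 < s) => ENNReal.ofReal |v s y|) s hs.1))
  have h_time : ∀ y ≠ x, ∫⁻ s in Ioo 0 t, k s y ≤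
      ENNReal.ofReal C * ENNReal.ofReal (‖x - y‖ ^ (-(2 : ℝ))) := fun y hy => by
    simp_rw [k, ENNReal.ofReal_mul hC.le]
    rw [lintegral_const_mul' _ _ ENNReal.ofReal_ne_top, Real.rpow_neg (norm_nonneg _),
      Real.rpow_two]
    gcongr
    exact lintegral_Ioo_inv_sub_add_sq_le (pow_pos (norm_pos_iff.2 (sub_ne_zero.2 hy.symm)) 2) t
  calc _ ≤ ∫⁻ s in Ioo 0 t, ∫⁻ y, k s y * (U y * V y) :=
        setLIntegral_mono' measurableSet_Ioo fun s hs => lintegral_mono (h_pointwise s hs)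
    _ ≤ ∫⁻ y, (∫⁻ s in Ioo 0 t, k s y) * (U y * V y) :=
        lintegral_lintegral_mul_le (by fun_prop) (fun _ _ => ENNReal.ofReal_ne_top) _
    _ ≤ ∫⁻ y, ENNReal.ofReal C * (ENNReal.ofReal (‖x - y‖ ^ (-(2 : ℝ))) * (U y * V y)) := by
        refine lintegral_mono_ae ?_
        filter_upwards [(countable_singleton x).ae_notMem volume] with y hy
        exact (mul_le_mul_left (h_time y hy) _).trans_eq (mul_assoc _ _ _)
    _ = _ := lintegral_const_mul' _ _ ENNReal.ofReal_ne_top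
end

section
/- The function m : ℝ × ℝ³ → ℂ, m(τ,ξ) = −|ξ|²/(|ξ|² + iτ) (defined for (τ,ξ) ≠ (0,0)), satisfies the parabolic Marcinkiewicz conditions: for every α ∈ ℕ₀³ and β ∈ ℕ₀, sup_{(τ,ξ)≠(0,0)} (|τ|^(1/2) + |ξ|)^(|α| + 2β) |∂_ξ^α ∂_τ^β m(τ,ξ)| < ∞. -/
/-!
The symbol `m` is smooth away from the origin and invariant under the parabolic dilations
`(τ, ξ) ↦ (l² τ, l ξ)`. Differentiating the identity `g ∘ δ_l = l ^ d • g` shows that a `∂_τ`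
derivative lowers the degree of homogeneity by `2` and a `∂_ξ` derivative by `1`, so
`∂^L m` is homogeneous of degree `-weight L`. Being continuous on the compact unit parabolic
sphere `√|τ| + |ξ| = 1`, it is bounded there, and rescaling any `p ≠ 0` onto that sphere gives
`|∂^L m (p)| ≤ C (√|τ| + |ξ|) ^ (-weight L)`.
-/

noncomputable section

/-- Iterated partial derivatives on `ℝ × ℝ³`: `none` stands for a `∂_τ` derivative,
`some i` for a `∂_{ξ_i}` derivative. -/
def parabolicDeriv :
    List (Option (Fin 3)) → ((ℝ × EuclideanSpace ℝ (Fin 3)) → ℂ) →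
      ((ℝ × EuclideanSpace ℝ (Fin 3)) → ℂ)
  | [], g => g
  | (none :: L), g => fun p => fderiv ℝ (parabolicDeriv L g) p (1, 0)
  | (some i :: L), g => fun p =>
      fderiv ℝ (parabolicDeriv L g) p (0, EuclideanSpace.single i 1)

/-- Parabolic weight of a list of derivatives: `τ`-derivatives count for `2`,
`ξ`-derivatives for `1`. -/
def parabolicWeight (L : List (Option (Fin 3))) : ℕ :=
  (L.map fun o => match o with | none => 2 | some _ => 1).sum

/-- The maximal-regularity symbol `m(τ,ξ) = -|ξ|²/(|ξ|² + iτ)`. -/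
def maxRegSymbol (p : ℝ × EuclideanSpace ℝ (Fin 3)) : ℂ :=
  -((‖p.2‖ ^ 2 : ℝ) : ℂ) / (((‖p.2‖ ^ 2 : ℝ) : ℂ) + Complex.I * (p.1 : ℂ))

open scoped ContDiff

section ParabolicScaling

variable {E F : Type*} [NormedAddCommGroup E] [NormedAddCommGroup F] [NormedSpace ℝ F]

def parabolicNorm (p : ℝ × E) : ℝ :=
  √|p.1| + ‖p.2‖

lemma continuous_parabolicNorm : Continuous (parabolicNorm : ℝ × E → ℝ) :=
  (continuous_abs.comp continuous_fst).sqrt.add continuous_snd.norm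

lemma parabolicNorm_pos {p : ℝ × E} (hp : p ≠ 0) : 0 < parabolicNorm p := by
  refine lt_of_le_of_ne (by unfold parabolicNorm; positivity) fun h => hp ?_
  have hτ := Real.sqrt_nonneg |p.1|
  have hξ := norm_nonneg p.2
  have hτ0 : √|p.1| = 0 := by unfold parabolicNorm at h; linarith
  have hξ0 : ‖p.2‖ = 0 := by unfold parabolicNorm at h; linarith
  rw [Real.sqrt_eq_zero (abs_nonneg _), abs_eq_zero] at hτ0
  exact Prod.ext hτ0 (norm_eq_zero.mp hξ0)

lemma isCompact_parabolicNorm_eq_one [ProperSpace E] :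
    IsCompact {p : ℝ × E | parabolicNorm p = 1} := by
  refine (isCompact_closedBall (0 : ℝ × E) 1).of_isClosed_subset
    (isClosed_eq continuous_parabolicNorm continuous_const) fun p hp => ?_
  have hτ := Real.sqrt_nonneg |p.1|
  have hξ := norm_nonneg p.2
  have hp' : √|p.1| + ‖p.2‖ = 1 := hp
  have hτ1 : |p.1| ≤ 1 := by
    rw [← Real.sqrt_le_one]
    linarith
  rw [mem_closedBall_zero_iff, Prod.norm_def, Real.norm_eq_abs]
  exact max_le hτ1 (by linarith)

variable [NormedSpace ℝ E]

def parabolicDilation (l : ℝ) : (ℝ × E) →L[ℝ] (ℝ × E) :=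
  ((l ^ 2) • ContinuousLinearMap.id ℝ ℝ).prodMap (l • ContinuousLinearMap.id ℝ E)

@[simp]
lemma parabolicDilation_apply (l : ℝ) (p : ℝ × E) :
    parabolicDilation l p = (l ^ 2 * p.1, l • p.2) := rfl

lemma parabolicNorm_dilation {l : ℝ} (hl : 0 ≤ l) (p : ℝ × E) :
    parabolicNorm (parabolicDilation l p) = l * parabolicNorm p := by
  simp only [parabolicNorm, parabolicDilation_apply, abs_mul, abs_pow, abs_of_nonneg hl,
    Real.sqrt_mul (pow_nonneg hl 2), Real.sqrt_sq hl, norm_smul, Real.norm_of_nonneg hl]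
  ring

def IsParabolicHomogeneous (d : ℤ) (g : ℝ × E → F) : Prop :=
  ∀ l : ℝ, 0 < l → ∀ p : ℝ × E, p ≠ 0 → g (parabolicDilation l p) = l ^ d • g p

lemma IsParabolicHomogeneous.fderiv_apply {d : ℤ} {g : ℝ × E → F}
    (hg : IsParabolicHomogeneous d g) (hdiff : ∀ p : ℝ × E, p ≠ 0 → DifferentiableAt ℝ g p)
    {v : ℝ × E} {j : ℕ} (hv : ∀ l : ℝ, parabolicDilation l v = l ^ j • v) :
    IsParabolicHomogeneous (d - j) fun p => fderiv ℝ g p v := by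
  intro l hl p hp
  have hlp : parabolicDilation l p ≠ 0 := by
    simpa [Prod.ext_iff, hl.ne'] using hp
  have hlocal : g ∘ parabolicDilation l =ᶠ[nhds p] fun q => l ^ d • g q :=
    Filter.eventuallyEq_of_mem (isOpen_compl_singleton.mem_nhds hp) fun q hq => hg l hl q hq
  have hcomp : fderiv ℝ (g ∘ parabolicDilation l) p =
      (fderiv ℝ g (parabolicDilation l p)).comp (parabolicDilation l) := by
    rw [fderiv_comp p (hdiff _ hlp)
      (ContinuousLinearMap.differentiableAt (parabolicDilation (E := E) l)),
      ContinuousLinearMap.fderiv]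
  have hchain : fderiv ℝ g (parabolicDilation l p) (l ^ j • v) = l ^ d • fderiv ℝ g p v := by
    rw [← hv, ← ContinuousLinearMap.comp_apply, ← hcomp, hlocal.fderiv_eq,
      fderiv_fun_const_smul (hdiff p hp), smul_apply]
  rw [map_smul, ← zpow_natCast] at hchain
  rw [zpow_sub₀ hl.ne', div_eq_mul_inv, mul_comm, mul_smul, ← hchain, ← mul_smul,
    inv_mul_cancel₀ (zpow_ne_zero _ hl.ne'), one_smul]

lemma IsParabolicHomogeneous.exists_norm_le [ProperSpace E] {d : ℤ} {g : ℝ × E → F}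
    (hg : IsParabolicHomogeneous d g) (hcont : ∀ p : ℝ × E, p ≠ 0 → ContinuousAt g p) :
    ∃ C, ∀ p : ℝ × E, p ≠ 0 → ‖g p‖ ≤ C * parabolicNorm p ^ d := by
  have hsphere : ∀ p ∈ {p : ℝ × E | parabolicNorm p = 1}, p ≠ 0 := by
    rintro p hp rfl
    simp [parabolicNorm] at hp
  obtain ⟨C, hC⟩ := isCompact_parabolicNorm_eq_one.exists_bound_of_continuousOn
    fun p hp => (hcont p (hsphere p hp)).continuousWithinAt
  refine ⟨C, fun p hp => ?_⟩
  have hN := parabolicNorm_pos hp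
  have hq : parabolicNorm (parabolicDilation (parabolicNorm p)⁻¹ p) = 1 := by
    rw [parabolicNorm_dilation (inv_nonneg.mpr hN.le), inv_mul_cancel₀ hN.ne']
  have hscale := hg _ (inv_pos.mpr hN) p hp
  calc ‖g p‖ = ‖g (parabolicDilation (parabolicNorm p)⁻¹ p)‖ * parabolicNorm p ^ d := by
        rw [hscale, norm_smul, norm_zpow, norm_inv, Real.norm_of_nonneg hN.le, inv_zpow]
        field_simp
    _ ≤ C * parabolicNorm p ^ d := by gcongr; exact hC _ hq

end ParabolicScaling

lemma contDiffAt_parabolicDeriv {g : ℝ × EuclideanSpace ℝ (Fin 3) → ℂ}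
    {p : ℝ × EuclideanSpace ℝ (Fin 3)} (hg : ContDiffAt ℝ ∞ g p) :
    ∀ L, ContDiffAt ℝ ∞ (parabolicDeriv L g) p
  | [] => hg
  | none :: L =>
    ((contDiffAt_parabolicDeriv hg L).fderiv_right le_rfl).clm_apply contDiffAt_const
  | some _ :: L =>
    ((contDiffAt_parabolicDeriv hg L).fderiv_right le_rfl).clm_apply contDiffAt_const

lemma isParabolicHomogeneous_parabolicDeriv {d : ℤ} {g : ℝ × EuclideanSpace ℝ (Fin 3) → ℂ}
    (hg : IsParabolicHomogeneous d g)
    (hsmooth : ∀ p : ℝ × EuclideanSpace ℝ (Fin 3), p ≠ 0 → ContDiffAt ℝ ∞ g p)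
    (L : List (Option (Fin 3))) :
    IsParabolicHomogeneous (d - parabolicWeight L) (parabolicDeriv L g) := by
  induction L with
  | nil => simpa [parabolicWeight, parabolicDeriv] using hg
  | cons o L ih =>
    have hdiff p (hp : p ≠ 0) : DifferentiableAt ℝ (parabolicDeriv L g) p :=
      (contDiffAt_parabolicDeriv (hsmooth p hp) L).differentiableAt (by simp)
    cases o with
    | none =>
      have h := ih.fderiv_apply hdiff (v := (1, 0)) (j := 2) fun l => by simp
      rwa [show d - ((parabolicWeight (none :: L) : ℕ) : ℤ) = d - parabolicWeight L - (2 : ℕ) by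
        simp [parabolicWeight]; ring]
    | some i =>
      have h := ih.fderiv_apply hdiff (v := (0, EuclideanSpace.single i 1)) (j := 1)
        fun l => by simp
      rwa [show d - ((parabolicWeight (some i :: L) : ℕ) : ℤ) = d - parabolicWeight L - (1 : ℕ) by
        simp [parabolicWeight]; ring]

lemma maxRegSymbol_denom_ne_zero {p : ℝ × EuclideanSpace ℝ (Fin 3)} (hp : p ≠ 0) :
    ((‖p.2‖ ^ 2 : ℝ) : ℂ) + Complex.I * (p.1 : ℂ) ≠ 0 := by
  intro h
  have hre := congrArg Complex.re h
  have him := congrArg Complex.im h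
  simp only [Complex.add_re, Complex.add_im, Complex.mul_re, Complex.mul_im, Complex.I_re,
    Complex.I_im, Complex.ofReal_re, Complex.ofReal_im, Complex.zero_re, Complex.zero_im] at hre him
  simp at hre him
  exact hp (Prod.ext him hre)

lemma contDiffAt_maxRegSymbol {p : ℝ × EuclideanSpace ℝ (Fin 3)} (hp : p ≠ 0) :
    ContDiffAt ℝ ∞ maxRegSymbol p := by
  have hξ : ContDiff ℝ ∞ fun q : ℝ × EuclideanSpace ℝ (Fin 3) => ((‖q.2‖ ^ 2 : ℝ) : ℂ) :=
    Complex.ofRealCLM.contDiff.comp ((contDiff_norm_sq ℝ).comp contDiff_snd)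
  have hτ : ContDiff ℝ ∞ fun q : ℝ × EuclideanSpace ℝ (Fin 3) => Complex.I * (q.1 : ℂ) :=
    contDiff_const.mul (Complex.ofRealCLM.contDiff.comp contDiff_fst)
  have hm : maxRegSymbol = fun q => -((‖q.2‖ ^ 2 : ℝ) : ℂ) *
      (((‖q.2‖ ^ 2 : ℝ) : ℂ) + Complex.I * (q.1 : ℂ))⁻¹ := by
    funext q
    exact div_eq_mul_inv _ _
  rw [hm]
  exact hξ.contDiffAt.neg.mul ((hξ.add hτ).contDiffAt.inv (maxRegSymbol_denom_ne_zero hp))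

lemma isParabolicHomogeneous_maxRegSymbol : IsParabolicHomogeneous 0 maxRegSymbol := by
  intro l hl p _
  have hl2 : ((l : ℂ) ^ 2) ≠ 0 := pow_ne_zero 2 (Complex.ofReal_ne_zero.mpr hl.ne')
  simp only [maxRegSymbol, parabolicDilation_apply, norm_smul, Real.norm_of_nonneg hl.le, mul_pow,
    zpow_zero, one_smul]
  push_cast
  calc _ = (l : ℂ) ^ 2 * -((‖p.2‖ : ℂ) ^ 2) /
        ((l : ℂ) ^ 2 * ((‖p.2‖ : ℂ) ^ 2 + Complex.I * p.1)) := by ring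
    _ = _ := mul_div_mul_left _ _ hl2

theorem maxRegSymbol_parabolic_marcinkiewicz :
    ∀ L : List (Option (Fin 3)), ∃ C : ℝ,
      ∀ p : ℝ × EuclideanSpace ℝ (Fin 3), p ≠ 0 →
        (Real.sqrt |p.1| + ‖p.2‖) ^ parabolicWeight L *
          ‖parabolicDeriv L maxRegSymbol p‖ ≤ C := by
  intro L
  have hsmooth p (hp : p ≠ 0) := contDiffAt_maxRegSymbol hp
  have hhom := isParabolicHomogeneous_parabolicDeriv isParabolicHomogeneous_maxRegSymbol hsmooth L
  obtain ⟨C, hC⟩ :=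
    hhom.exists_norm_le fun p hp => (contDiffAt_parabolicDeriv (hsmooth p hp) L).continuousAt
  refine ⟨C, fun p hp => ?_⟩
  have hN := parabolicNorm_pos hp
  calc parabolicNorm p ^ parabolicWeight L * ‖parabolicDeriv L maxRegSymbol p‖
      ≤ parabolicNorm p ^ parabolicWeight L *
          (C * parabolicNorm p ^ (0 - parabolicWeight L : ℤ)) := by
        gcongr
        exact hC p hp
    _ = C := by
        rw [zero_sub, zpow_neg, zpow_natCast]
        field_simp
end
end
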